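/- Let 0 < n < 1 and λ > 0, and set r₀ = 1 + 2λ/(2−n). Let F : ℝ³ → ℝ³ denote the vector field of the (p,q,r) system, i.e. F(p,q,r) = (p((r−1)/λ + 1 − n/(2−n) − λpr − λq/(2−n)), q(1 − λpr − λq/(2−n)) + npr, (r/n)((1−n)(r−1)/λ − 1 + n/(2−n) + λpr + λq/(2−n))). Then the Jacobian matrix of F at the equilibrium M₀ = (0, 0, r₀) has characteristic polynomial (X − 1)(X − 2)(X − (1−n)r₀/(nλ)); its three eigenvalues 1, 2, (1−n)r₀/(nλ) are real and strictly positive, so M₀ is an unstable node. -/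

import Mathlib

/-!
On the `r`-axis `p = q = 0` the `p`-equation is `p · (…)` and every term of the `q`-equation
carries a factor `p` or `q`, so the Jacobian at `(0, 0, r)` is lower triangular and its
eigenvalues are its diagonal entries. At `r = r₀` these are `2`, `1` and, since `r₀` is exactly
the root of the bracket in the `r`-equation, `r₀/n` times the derivative `(1-n)/λ` of that
bracket.
-/

open Polynomial

/-- The vector field of the `(p,q,r)` system (with the third equation solved for `r'`). -/
noncomputable def Fvec (n lam : ℝ) (v : Fin 3 → ℝ) : Fin 3 → ℝ :=
  ![v 0 * ((v 2 - 1) / lam + 1 - n / (2 - n) - lam * v 0 * v 2 - lam * v 1 / (2 - n)),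
    v 1 * (1 - lam * v 0 * v 2 - lam * v 1 / (2 - n)) + n * v 0 * v 2,
    (v 2 / n) * ((1 - n) * (v 2 - 1) / lam - 1 + n / (2 - n)
      + lam * v 0 * v 2 + lam * v 1 / (2 - n))]

/-- The Jacobian matrix of the `(p,q,r)` vector field at a point. -/
noncomputable def Jac (n lam : ℝ) (x : Fin 3 → ℝ) : Matrix (Fin 3) (Fin 3) ℝ :=
  LinearMap.toMatrix' ((fderiv ℝ (Fvec n lam) x : (Fin 3 → ℝ) →L[ℝ] (Fin 3 → ℝ)) :
    (Fin 3 → ℝ) →ₗ[ℝ] (Fin 3 → ℝ))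

namespace Matrix

variable {K : Type*} [Field K]

theorem charpoly_of_isLowerTriangular {ι : Type*} [Fintype ι] [DecidableEq ι] [LinearOrder ι]
    (A : Matrix ι ι K) (h : A.IsLowerTriangular) :
    A.charpoly = ∏ i : ι, (X - C (A i i)) := by
  rw [← charpoly_transpose]
  exact charpoly_of_isUpperTriangular _ h.transpose

theorem spectrum_of_isLowerTriangular {ι : Type*} [Fintype ι] [DecidableEq ι] [LinearOrder ι]
    (A : Matrix ι ι K) (h : A.IsLowerTriangular) :
    spectrum K A = Set.range A.diag := by
  ext μ
  rw [mem_spectrum_iff_isRoot_charpoly, charpoly_of_isLowerTriangular A h, IsRoot.def,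
    eval_prod, Finset.prod_eq_zero_iff]
  simp [sub_eq_zero, eq_comm]

section FinThree

variable (a b c d e f : K)

theorem isLowerTriangular_of_fin_three : (!![a, 0, 0; b, c, 0; d, e, f]).IsLowerTriangular := by
  intro i j hij
  fin_cases i <;> fin_cases j <;> first | rfl | exact absurd hij (by decide)

theorem charpoly_of_fin_three_lower :
    (!![a, 0, 0; b, c, 0; d, e, f]).charpoly = (X - C a) * (X - C c) * (X - C f) := by
  rw [charpoly_of_isLowerTriangular _ (isLowerTriangular_of_fin_three a b c d e f),
    Fin.prod_univ_three]
  rfl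

theorem spectrum_of_fin_three_lower :
    spectrum K !![a, 0, 0; b, c, 0; d, e, f] = {a, c, f} := by
  have hdiag : !![a, 0, 0; b, c, 0; d, e, f].diag = ![a, c, f] := by
    ext i
    fin_cases i <;> rfl
  rw [spectrum_of_isLowerTriangular _ (isLowerTriangular_of_fin_three a b c d e f), hdiag,
    range_cons, range_cons_cons_empty]
  rfl

end FinThree

end Matrix

theorem LinearMap.toMatrix'_fderiv_of_hasFDerivAt {ι κ : Type*} [Fintype ι] [DecidableEq ι]
    {f : (ι → ℝ) → κ → ℝ} {x : ι → ℝ} {M : Matrix κ ι ℝ}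
    (h : HasFDerivAt f (Matrix.toLin' M).toContinuousLinearMap x) :
    LinearMap.toMatrix' (fderiv ℝ f x : (ι → ℝ) →ₗ[ℝ] κ → ℝ) = M := by
  rw [h.fderiv]
  exact LinearMap.toMatrix'_toLin' M

open ContinuousLinearMap in
theorem Jac_zero_zero (n lam r : ℝ) :
    Jac n lam ![0, 0, r] =
      !![(r - 1) / lam + 1 - n / (2 - n), 0, 0;
         n * r, 1, 0;
         lam * r ^ 2 / n, r / n * (lam / (2 - n)),
           ((1 - n) * (r - 1) / lam - 1 + n / (2 - n)) / n + r / n * ((1 - n) / lam)] := by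
  refine LinearMap.toMatrix'_fderiv_of_hasFDerivAt (hasFDerivAt_pi'' fun i => ?_)
  set x : Fin 3 → ℝ := ![0, 0, r]
  have hp : HasFDerivAt (fun v : Fin 3 → ℝ => v 0) (proj 0 : (Fin 3 → ℝ) →L[ℝ] ℝ) x :=
    hasFDerivAt_apply 0 x
  have hq : HasFDerivAt (fun v : Fin 3 → ℝ => v 1) (proj 1 : (Fin 3 → ℝ) →L[ℝ] ℝ) x :=
    hasFDerivAt_apply 1 x
  have hr : HasFDerivAt (fun v : Fin 3 → ℝ => v 2) (proj 2 : (Fin 3 → ℝ) →L[ℝ] ℝ) x :=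
    hasFDerivAt_apply 2 x
  have hpr := (hp.const_mul lam).mul hr
  have hq' := hq.const_mul (lam / (2 - n))
  fin_cases i
  · refine (hp.mul ((((hr.sub_const 1).mul_const lam⁻¹).add_const (1 - n / (2 - n))).sub hpr
      |>.sub hq')).congr_of_eventuallyEq (.of_forall fun v => ?_) |>.congr_fderiv ?_
    · simp only [Fvec, Fin.zero_eta, Matrix.cons_val, Pi.mul_apply, Pi.sub_apply]
      ring
    · ext w
      simp only [x, Fin.zero_eta, Matrix.cons_val, add_apply, sub_apply, smul_apply, proj_apply,
        comp_apply, smul_eq_mul, Pi.mul_apply, Pi.sub_apply,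
        LinearMap.coe_toContinuousLinearMap', Matrix.toLin'_apply, Matrix.mulVec, dotProduct,
        Fin.sum_univ_three, Matrix.of_apply]
      ring
  · refine ((hq.mul ((hpr.const_sub 1).sub hq')).add ((hp.const_mul n).mul hr))
      |>.congr_of_eventuallyEq (.of_forall fun v => ?_) |>.congr_fderiv ?_
    · simp only [Fvec, Fin.mk_one, Matrix.cons_val, Pi.mul_apply, Pi.add_apply, Pi.sub_apply]
      ring
    · ext w
      simp only [x, Fin.mk_one, Matrix.cons_val, add_apply, sub_apply, smul_apply, proj_apply,
        comp_apply, smul_eq_mul, Pi.mul_apply, Pi.sub_apply,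
        LinearMap.coe_toContinuousLinearMap', Matrix.toLin'_apply, Matrix.mulVec, dotProduct,
        Fin.sum_univ_three, Matrix.of_apply]
      ring
  · refine ((hr.mul_const n⁻¹).mul ((((hr.sub_const 1).const_mul (1 - n)).mul_const lam⁻¹
      |>.add_const (n / (2 - n) - 1)).add hpr |>.add hq'))
      |>.congr_of_eventuallyEq (.of_forall fun v => ?_) |>.congr_fderiv ?_
    · simp only [Fvec, Fin.reduceFinMk, Matrix.cons_val, Pi.mul_apply, Pi.add_apply]
      ring
    · ext w
      simp only [x, Fin.reduceFinMk, Matrix.cons_val, add_apply, smul_apply, proj_apply,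
        comp_apply, smul_eq_mul, Pi.mul_apply, Pi.add_apply,
        LinearMap.coe_toContinuousLinearMap', Matrix.toLin'_apply, Matrix.mulVec, dotProduct,
        Fin.sum_univ_three, Matrix.of_apply]
      ring

/-- the equilibrium `M₀` is an unstable node, with eigenvalues
`1`, `2` and `(1-n)r₀/(nλ)`, all real and strictly positive. -/
theorem stmt16 (n lam : ℝ) (hn0 : 0 < n) (hn1 : n < 1) (hlam : 0 < lam)
    (r₀ : ℝ) (hr₀ : r₀ = 1 + 2 * lam / (2 - n)) :
    (Jac n lam ![0, 0, r₀]).charpoly =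
      (X - C 1) * (X - C 2) * (X - C ((1 - n) * r₀ / (n * lam))) ∧
    spectrum ℝ (Jac n lam ![0, 0, r₀]) = {1, 2, (1 - n) * r₀ / (n * lam)} ∧
    (0 : ℝ) < 1 ∧ (0 : ℝ) < 2 ∧ 0 < (1 - n) * r₀ / (n * lam) := by
  have h2n : 0 < 2 - n := by linarith
  have hp_rate : (r₀ - 1) / lam + 1 - n / (2 - n) = 2 := by
    subst hr₀; field_simp; ring
  have hr_rate : ((1 - n) * (r₀ - 1) / lam - 1 + n / (2 - n)) / n + r₀ / n * ((1 - n) / lam) =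
      (1 - n) * r₀ / (n * lam) := by
    subst hr₀; field_simp; ring
  have hr₀_pos : 0 < r₀ := hr₀ ▸ by positivity
  have hc_pos : 0 < (1 - n) * r₀ / (n * lam) :=
    div_pos (mul_pos (by linarith) hr₀_pos) (mul_pos hn0 hlam)
  refine ⟨?_, ?_, one_pos, two_pos, hc_pos⟩
  · rw [Jac_zero_zero, hp_rate, hr_rate, Matrix.charpoly_of_fin_three_lower]
    ring
  · rw [Jac_zero_zero, hp_rate, hr_rate, Matrix.spectrum_of_fin_three_lower, Set.insert_comm]
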